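/- arXiv:1701.01283 — 2 statements merged into one kernel-verified Lean document; each statement's English description precedes it below -/
import Mathlib

section
/- For 0 < α < 1, define β = τ^{1-α}/Γ(3-α) with 0 < τ ≤ 1, and G_1 = 2^{2-α} − 2. Then β·G_1 ≤ 1 + β. -/
theorem stmt_10 (α τ : ℝ) (hα0 : 0 < α) (hα1 : α < 1) (hτ0 : 0 < τ) (hτ1 : τ ≤ 1)
    (β : ℝ) (hβ : β = τ ^ (1 - α) / Real.Gamma (3 - α)) :
    β * ((2 : ℝ) ^ (2 - α) - 2) ≤ 1 + β := by
  have hG1 : (1 : ℝ) ≤ Real.Gamma (3 - α) := by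
    have h2 : Real.Gamma 2 = 1 := by
      simpa using Real.Gamma_two
    rcases eq_or_lt_of_le (by linarith : (2:ℝ) ≤ 3 - α) with h | h
    · rw [← h, h2]
    · have := Real.Gamma_strictMonoOn_Ici (by simp : (2:ℝ) ∈ Set.Ici 2)
        (by simp [Set.mem_Ici]; linarith : (3 - α : ℝ) ∈ Set.Ici 2) h
      linarith [h2 ▸ this]
  have hGpos : 0 < Real.Gamma (3 - α) := by linarith
  have hτp : 0 < τ ^ (1 - α) := Real.rpow_pos_of_pos hτ0 _
  have hτle : τ ^ (1 - α) ≤ 1 := Real.rpow_le_one hτ0.le hτ1 (by linarith)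
  have hβpos : 0 < β := by rw [hβ]; positivity
  have hβle : β ≤ 1 := by
    rw [hβ, div_le_one hGpos]; linarith
  -- rewrite goal as β * (2^(2-α) - 3) ≤ 1
  have hkey : β * ((2:ℝ) ^ (2 - α) - 3) ≤ 1 := by
    rcases le_or_gt ((2:ℝ) ^ (2 - α)) 3 with h | h
    · have : β * ((2:ℝ) ^ (2 - α) - 3) ≤ 0 :=
        mul_nonpos_of_nonneg_of_nonpos hβpos.le (by linarith)
      linarith
    · have h4 : (2:ℝ) ^ (2 - α) ≤ 4 := by
        have : (2:ℝ) ^ (2 - α) ≤ (2:ℝ) ^ (2:ℝ) :=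
          Real.rpow_le_rpow_of_exponent_le one_le_two (by linarith)
        have h22 : (2:ℝ) ^ (2:ℝ) = 4 := by
          rw [show (2:ℝ) = ((2:ℕ):ℝ) from rfl, Real.rpow_natCast]; norm_num
        linarith [h22 ▸ this]
      calc β * ((2:ℝ) ^ (2 - α) - 3) ≤ 1 * 1 := by
            apply mul_le_mul hβle (by linarith) (by linarith) (by norm_num)
        _ = 1 := by norm_num
  nlinarith [hkey, hβpos]
end

section
/- Let 0 < α < 1 and let (d_k) be a sequence of complex numbers. Suppose A, β > 0, G_j := (j+1)^{2-α} − 2j^{2-α} + (j-1)^{2-α} for j ≥ 1, and that (A + 1 + β)d_1 = (−A + 1 + β)d_0 and for each k ≥ 1, (A + 1 + β)d_{k+1} = (−A + 1 + β − βG_1)d_k + β∑_{j=1}^{k-1}(G_{k-j} − G_{k-j+1})d_j + βG_k d_0. If additionally βG_1 ≤ 1 + β, then |d_k| ≤ |d_0| for all k ≥ 1. -/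
/-!
Write `f(x) = x^(2-α)`. Then `G_j = (f(j+1) - f(j)) - (f(j) - f(j-1))` is nonnegative because `f`
is convex, and `G_j = φ(j) - φ(j-1)` for `φ(x) = (x+1)^(2-α) - x^(2-α)` is nonincreasing because
`φ` is concave (its derivative is `2-α` times an increment of the concave `x^(1-α)`). Hence the
coefficients `G_{k-j} - G_{k-j+1}` on the right of the recurrence are nonnegative and telescope to
`G_1 - G_k`. Assuming `|d_j| ≤ |d_0|` for all `j ≤ k`, the triangle inequality bounds
`(A + 1 + β) |d_{k+1}|` by `(|-A + 1 + β - βG_1| + β(G_1 - G_k) + βG_k) |d_0|`, and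
`βG_1 ≤ 1 + β` makes the first coefficient equal to `A + 1 + β - βG_1`, so the bound is
`(A + 1 + β) |d_0|`.
-/

open Set

section Increment

variable {𝕜 : Type*} [Field 𝕜] [LinearOrder 𝕜] [IsStrictOrderedRing 𝕜] {s : Set 𝕜} {f : 𝕜 → 𝕜}
  {x y h : 𝕜}

theorem ConvexOn.add_sub_le_add_sub (hf : ConvexOn 𝕜 s f) (hx : x ∈ s) (hyh : y + h ∈ s)
    (hxy : x ≤ y) (hh : 0 ≤ h) : f (x + h) - f x ≤ f (y + h) - f y := by
  rcases hh.eq_or_lt with rfl | hh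
  · simp
  have hs := convex_iff_ordConnected.mp hf.1
  have hxh : x + h ∈ s := hs.out hx hyh ⟨by linarith, by linarith⟩
  have hy : y ∈ s := hs.out hx hyh ⟨hxy, by linarith⟩
  -- both increments are compared with the slope of the chord from `x` to `y + h`
  have key : slope f x (x + h) ≤ slope f y (y + h) :=
    calc slope f x (x + h) ≤ slope f x (y + h) :=
          hf.slope_mono hx ⟨hxh, by simpa using hh.ne'⟩ ⟨hyh, by simp; linarith⟩ (by linarith)
      _ = slope f (y + h) x := slope_comm ..
      _ ≤ slope f (y + h) y :=
          hf.slope_mono hyh ⟨hx, by simp; linarith⟩ ⟨hy, by simp; linarith⟩ hxy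
      _ = slope f y (y + h) := slope_comm ..
  simp only [slope_def_field, add_sub_cancel_left] at key
  exact (div_le_div_iff_of_pos_right hh).mp key

theorem ConcaveOn.add_sub_le_add_sub (hf : ConcaveOn 𝕜 s f) (hx : x ∈ s) (hyh : y + h ∈ s)
    (hxy : x ≤ y) (hh : 0 ≤ h) : f (y + h) - f y ≤ f (x + h) - f x := by
  have := hf.neg.add_sub_le_add_sub hx hyh hxy hh
  simp only [Pi.neg_apply] at this
  linarith

end Increment

section SecondDifference

variable {p : ℝ}

theorem hasDerivAt_add_one_rpow_sub_rpow (hp : 1 ≤ p) (x : ℝ) :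
    HasDerivAt (fun t : ℝ ↦ (t + 1) ^ p - t ^ p) (p * (x + 1) ^ (p - 1) - p * x ^ (p - 1)) x := by
  have h := (Real.hasDerivAt_rpow_const (x := x + 1) (Or.inr hp)).comp x
    ((hasDerivAt_id x).add_const 1)
  rw [mul_one] at h
  exact h.sub (Real.hasDerivAt_rpow_const (Or.inr hp))

theorem concaveOn_add_one_rpow_sub_rpow (hp₁ : 1 ≤ p) (hp₂ : p ≤ 2) :
    ConcaveOn ℝ (Ici 0) (fun t : ℝ ↦ (t + 1) ^ p - t ^ p) := by
  have hderiv := hasDerivAt_add_one_rpow_sub_rpow hp₁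
  refine AntitoneOn.concaveOn_of_deriv (convex_Ici 0)
    (fun t _ ↦ (hderiv t).continuousAt.continuousWithinAt)
    (fun t _ ↦ (hderiv t).differentiableAt.differentiableWithinAt) ?_
  intro s hs t ht hst
  rw [interior_Ici] at hs ht
  rw [(hderiv s).deriv, (hderiv t).deriv, ← mul_sub, ← mul_sub]
  have hincr := (Real.concaveOn_rpow (by linarith) (by linarith : p - 1 ≤ 1)).add_sub_le_add_sub
    (Ioi_subset_Ici_self hs) (mem_Ici.mpr (by linarith [mem_Ioi.mp ht])) hst zero_le_one
  exact mul_le_mul_of_nonneg_left hincr (by linarith)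

theorem rpow_second_diff_nonneg {x : ℝ} (hp : 1 ≤ p) (hx : 1 ≤ x) :
    0 ≤ (x + 1) ^ p - 2 * x ^ p + (x - 1) ^ p := by
  have := (convexOn_rpow hp).add_sub_le_add_sub (show x - 1 ∈ Ici 0 by simpa using hx)
    (mem_Ici.mpr (by linarith)) (sub_one_lt x).le zero_le_one
  rw [sub_add_cancel] at this
  linarith

theorem rpow_second_diff_succ_le {x : ℝ} (hp₁ : 1 ≤ p) (hp₂ : p ≤ 2) (hx : 1 ≤ x) :
    (x + 1 + 1) ^ p - 2 * (x + 1) ^ p + (x + 1 - 1) ^ p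
      ≤ (x + 1) ^ p - 2 * x ^ p + (x - 1) ^ p := by
  have := (concaveOn_add_one_rpow_sub_rpow hp₁ hp₂).add_sub_le_add_sub
    (show x - 1 ∈ Ici 0 by simpa using hx) (mem_Ici.mpr (by linarith)) (sub_one_lt x).le
    zero_le_one
  simp only [sub_add_cancel, add_sub_cancel_right] at this ⊢
  linarith

end SecondDifference

section Stability

theorem sum_Icc_sub_reflect (G : ℕ → ℝ) {k : ℕ} (hk : 1 ≤ k) :
    ∑ j ∈ Finset.Icc 1 (k - 1), (G (k - j) - G (k - j + 1)) = G 1 - G k := by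
  rw [Finset.Icc_sub_one_right_eq_Ico_of_not_isMin (by simp; omega),
    Finset.sum_Ico_reflect (fun i ↦ G i - G (i + 1)) 1 (by omega), Nat.add_sub_cancel_left,
    Nat.add_sub_cancel, ← neg_sub, ← Finset.sum_Ico_sub G hk, ← Finset.sum_neg_distrib]
  simp only [neg_sub]

theorem norm_sum_ofReal_mul_le {ι : Type*} (s : Finset ι) {c : ι → ℝ} {z : ι → ℂ} {M : ℝ}
    (hc : ∀ i ∈ s, 0 ≤ c i) (hz : ∀ i ∈ s, ‖z i‖ ≤ M) :
    ‖∑ i ∈ s, (c i : ℂ) * z i‖ ≤ (∑ i ∈ s, c i) * M :=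
  calc ‖∑ i ∈ s, (c i : ℂ) * z i‖ ≤ ∑ i ∈ s, ‖(c i : ℂ) * z i‖ := norm_sum_le _ _
    _ ≤ ∑ i ∈ s, c i * M := Finset.sum_le_sum fun i hi ↦ by
        rw [norm_mul, Complex.norm_of_nonneg (hc i hi)]
        exact mul_le_mul_of_nonneg_left (hz i hi) (hc i hi)
    _ = (∑ i ∈ s, c i) * M := (Finset.sum_mul ..).symm

variable {A β : ℝ} {G : ℕ → ℝ} {d : ℕ → ℂ}

theorem norm_one_le_of_recurrence (hA : 0 ≤ A) (hβ : 0 ≤ β)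
    (h0 : ((A + 1 + β : ℝ) : ℂ) * d 1 = ((-A + 1 + β : ℝ) : ℂ) * d 0) :
    ‖d 1‖ ≤ ‖d 0‖ := by
  have hpos : 0 < A + 1 + β := by linarith
  have hnorm := congrArg norm h0
  rw [norm_mul, norm_mul, Complex.norm_of_nonneg hpos.le, Complex.norm_real,
    Real.norm_eq_abs] at hnorm
  refine le_of_mul_le_mul_left ?_ hpos
  rw [hnorm]
  exact mul_le_mul_of_nonneg_right (abs_le.2 ⟨by linarith, by linarith⟩) (norm_nonneg _)

theorem norm_succ_le_of_recurrence {k : ℕ} (hA : 0 ≤ A) (hβ : 0 ≤ β)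
    (hG_nonneg : ∀ j, 1 ≤ j → 0 ≤ G j) (hG_anti : ∀ j, 1 ≤ j → G (j + 1) ≤ G j)
    (hstab : β * G 1 ≤ 1 + β) (hk : 1 ≤ k)
    (hrec : ((A + 1 + β : ℝ) : ℂ) * d (k + 1)
        = ((-A + 1 + β - β * G 1 : ℝ) : ℂ) * d k
          + (β : ℂ) * ∑ j ∈ Finset.Icc 1 (k - 1), ((G (k - j) - G (k - j + 1) : ℝ) : ℂ) * d j
          + ((β * G k : ℝ) : ℂ) * d 0)
    (ih : ∀ j ≤ k, ‖d j‖ ≤ ‖d 0‖) :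
    ‖d (k + 1)‖ ≤ ‖d 0‖ := by
  have hpos : 0 < A + 1 + β := by linarith
  have hlocal : ‖((-A + 1 + β - β * G 1 : ℝ) : ℂ) * d k‖ ≤ (A + 1 + β - β * G 1) * ‖d 0‖ := by
    rw [norm_mul, Complex.norm_real, Real.norm_eq_abs]
    exact mul_le_mul (abs_le.2 ⟨by linarith, by linarith⟩) (ih k le_rfl) (norm_nonneg _)
      (by linarith)
  have hhistory : ‖(β : ℂ) * ∑ j ∈ Finset.Icc 1 (k - 1),
      ((G (k - j) - G (k - j + 1) : ℝ) : ℂ) * d j‖ ≤ β * ((G 1 - G k) * ‖d 0‖) := by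
    rw [norm_mul, Complex.norm_of_nonneg hβ, ← sum_Icc_sub_reflect G hk]
    refine mul_le_mul_of_nonneg_left (norm_sum_ofReal_mul_le _ (fun j hj ↦ ?_) fun j hj ↦ ?_) hβ
    · rw [Finset.mem_Icc] at hj
      exact sub_nonneg.2 (hG_anti _ (by omega))
    · exact ih j (by rw [Finset.mem_Icc] at hj; omega)
  have hinitial : ‖((β * G k : ℝ) : ℂ) * d 0‖ = β * G k * ‖d 0‖ := by
    rw [norm_mul, Complex.norm_of_nonneg (mul_nonneg hβ (hG_nonneg k hk))]
  refine le_of_mul_le_mul_left ?_ hpos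
  calc (A + 1 + β) * ‖d (k + 1)‖ = ‖((A + 1 + β : ℝ) : ℂ) * d (k + 1)‖ := by
        rw [norm_mul, Complex.norm_of_nonneg hpos.le]
    _ ≤ (A + 1 + β - β * G 1) * ‖d 0‖ + β * ((G 1 - G k) * ‖d 0‖) + β * G k * ‖d 0‖ := by
        rw [hrec]
        exact norm_add₃_le.trans (by linarith)
    _ = (A + 1 + β) * ‖d 0‖ := by ring

theorem norm_le_norm_zero_of_recurrence (hA : 0 ≤ A) (hβ : 0 ≤ β)
    (hG_nonneg : ∀ j, 1 ≤ j → 0 ≤ G j) (hG_anti : ∀ j, 1 ≤ j → G (j + 1) ≤ G j)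
    (h0 : ((A + 1 + β : ℝ) : ℂ) * d 1 = ((-A + 1 + β : ℝ) : ℂ) * d 0)
    (hrec : ∀ k : ℕ, 1 ≤ k →
      ((A + 1 + β : ℝ) : ℂ) * d (k + 1)
        = ((-A + 1 + β - β * G 1 : ℝ) : ℂ) * d k
          + (β : ℂ) * ∑ j ∈ Finset.Icc 1 (k - 1), ((G (k - j) - G (k - j + 1) : ℝ) : ℂ) * d j
          + ((β * G k : ℝ) : ℂ) * d 0)
    (hstab : β * G 1 ≤ 1 + β) (k : ℕ) :
    ‖d k‖ ≤ ‖d 0‖ := by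
  induction k using Nat.strong_induction_on with
  | _ k ih =>
    match k with
    | 0 => exact le_rfl
    | 1 => exact norm_one_le_of_recurrence hA hβ h0
    | k + 2 =>
      exact norm_succ_le_of_recurrence hA hβ hG_nonneg hG_anti hstab (by omega)
        (hrec (k + 1) (by omega)) fun j hj ↦ ih j (by omega)

end Stability

theorem stmt_12 (α : ℝ) (hα0 : 0 < α) (hα1 : α < 1) (d : ℕ → ℂ) (A β : ℝ)
    (hA : 0 < A) (hβ : 0 < β) (G : ℕ → ℝ)
    (hG : ∀ j, G j = ((j : ℝ) + 1) ^ (2 - α) - 2 * (j : ℝ) ^ (2 - α) + ((j : ℝ) - 1) ^ (2 - α))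
    (h0 : ((A + 1 + β : ℝ) : ℂ) * d 1 = ((-A + 1 + β : ℝ) : ℂ) * d 0)
    (hrec : ∀ k : ℕ, 1 ≤ k →
      ((A + 1 + β : ℝ) : ℂ) * d (k + 1)
        = ((-A + 1 + β - β * G 1 : ℝ) : ℂ) * d k
          + (β : ℂ) * ∑ j ∈ Finset.Icc 1 (k - 1), ((G (k - j) - G (k - j + 1) : ℝ) : ℂ) * d j
          + ((β * G k : ℝ) : ℂ) * d 0)
    (hstab : β * G 1 ≤ 1 + β) :
    ∀ k : ℕ, 1 ≤ k → ‖d k‖ ≤ ‖d 0‖ := by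
  have hp₁ : 1 ≤ 2 - α := by linarith
  have hp₂ : 2 - α ≤ 2 := by linarith
  have hG_nonneg : ∀ j, 1 ≤ j → 0 ≤ G j := fun j hj ↦ by
    rw [hG]
    exact rpow_second_diff_nonneg hp₁ (by exact_mod_cast hj)
  have hG_anti : ∀ j, 1 ≤ j → G (j + 1) ≤ G j := fun j hj ↦ by
    rw [hG, hG]
    push_cast
    exact rpow_second_diff_succ_le hp₁ hp₂ (by exact_mod_cast hj)
  exact fun k _ ↦ norm_le_norm_zero_of_recurrence hA.le hβ.le hG_nonneg hG_anti h0 hrec hstab k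
end
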